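/- arXiv:2501.09202 — 9 statements merged into one kernel-verified Lean document; each statement's English description precedes it below -/
import Mathlib

section
/- If 0 < a < b, then (2/π)(1 - a/b) ≤ sup_{t > 0} |sin(a t)/(a t) - sin(b t)/(b t)|. -/
/-!
Evaluate at `t = π / b`, where `sin (b t) = 0`: the difference reduces to `sin x / x` with
`x = π a / b ∈ (0, π)`. Jordan's inequality `sin y ≥ 2 y / π` on `[0, π/2]`, applied to the
nearer of `x` and `π - x`, gives `sin x ≥ 2 x (π - x) / π²`, which is exactly
`sin x / x ≥ (2 / π) (1 - a / b)`.
-/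

open Real

namespace Real

theorem two_mul_mul_pi_sub_div_sq_le_sin {x : ℝ} (hx₀ : 0 ≤ x) (hxπ : x ≤ π) :
    2 * x * (π - x) / π ^ 2 ≤ sin x := by
  have hπ := pi_pos
  rw [div_le_iff₀ (by positivity)]
  rcases le_or_gt x (π / 2) with hx | hx
  · have jordan : 2 / π * x ≤ sin x := mul_le_sin hx₀ hx
    rw [div_mul_eq_mul_div, div_le_iff₀ hπ] at jordan
    nlinarith [mul_le_mul_of_nonneg_left jordan hπ.le]
  · have jordan : 2 / π * (π - x) ≤ sin x := by
      simpa only [sin_pi_sub] using mul_le_sin (x := π - x) (by linarith) (by linarith)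
    rw [div_mul_eq_mul_div, div_le_iff₀ hπ] at jordan
    nlinarith [mul_le_mul_of_nonneg_left jordan hπ.le]

theorem two_div_pi_mul_one_sub_div_pi_le_sin_div {x : ℝ} (hx₀ : 0 < x) (hxπ : x ≤ π) :
    2 / π * (1 - x / π) ≤ sin x / x := by
  rw [le_div_iff₀ hx₀]
  calc 2 / π * (1 - x / π) * x = 2 * x * (π - x) / π ^ 2 := by field_simp
    _ ≤ sin x := two_mul_mul_pi_sub_div_sq_le_sin hx₀.le hxπ

theorem abs_sin_div_self_le_one (x : ℝ) : |sin x / x| ≤ 1 := by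
  rcases eq_or_ne x 0 with rfl | hx
  · simp
  · rw [← sinc_of_ne_zero hx]
    exact abs_sinc_le_one x

end Real

theorem bddAbove_abs_sin_div_sub_sin_div (a b : ℝ) :
    BddAbove {x : ℝ | ∃ t : ℝ, 0 < t ∧
      x = |Real.sin (a * t) / (a * t) - Real.sin (b * t) / (b * t)|} := by
  refine ⟨2, ?_⟩
  rintro _ ⟨t, -, rfl⟩
  calc |sin (a * t) / (a * t) - sin (b * t) / (b * t)|
      ≤ |sin (a * t) / (a * t)| + |sin (b * t) / (b * t)| := abs_sub _ _
    _ ≤ 1 + 1 := add_le_add (abs_sin_div_self_le_one _) (abs_sin_div_self_le_one _)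
    _ = 2 := by norm_num

theorem stmt_0 (a b : ℝ) (ha : 0 < a) (hab : a < b) :
    (2 / Real.pi) * (1 - a / b) ≤
      sSup {x : ℝ | ∃ t : ℝ, 0 < t ∧
        x = |Real.sin (a * t) / (a * t) - Real.sin (b * t) / (b * t)|} := by
  have hb : 0 < b := ha.trans hab
  set t := π / b with ht
  have ht₀ : 0 < t := by positivity
  have hbt : b * t = π := by rw [ht]; field_simp
  have hat₀ : 0 < a * t := by positivity
  have hatπ : a * t ≤ π := hbt ▸ mul_le_mul_of_nonneg_right hab.le ht₀.le
  calc 2 / π * (1 - a / b) = 2 / π * (1 - a * t / π) := by rw [ht]; field_simp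
    _ ≤ sin (a * t) / (a * t) := two_div_pi_mul_one_sub_div_pi_le_sin_div hat₀ hatπ
    _ = |sin (a * t) / (a * t) - sin (b * t) / (b * t)| := by
      rw [hbt, sin_pi, zero_div, sub_zero,
        abs_of_nonneg (div_nonneg (sin_nonneg_of_nonneg_of_le_pi hat₀.le hatπ) hat₀.le)]
    _ ≤ _ := le_csSup (bddAbove_abs_sin_div_sub_sin_div a b) ⟨t, ht₀, rfl⟩
end

section
/- If (n_k) is a non-decreasing sequence of positive integers (1 ≤ n_1 ≤ n_2 ≤ ...) with n_k → ∞, then ∑_{k=1}^∞ (1 - n_k/n_{k+1}) = ∞. -/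
/-!
Since `1 - a j / a (j+1) = (a (j+1) - a j) / a (j+1) ≥ (a (j+1) - a j) / a m` for `j < m`, the terms
from `k` to `m - 1` telescope to at least `1 - a k / a m`. As `a → ∞`, this exceeds `1/2` for `m`
large, so the partial sums are not Cauchy.
-/

open Filter Finset

section

variable {a : ℕ → ℝ}

lemma one_sub_div_succ_nonneg (ha : ∀ k, 0 < a k) (hmono : Monotone a) (k : ℕ) :
    0 ≤ 1 - a k / a (k + 1) := by
  rw [sub_nonneg]
  exact div_le_one_of_le₀ (hmono k.le_succ) (ha (k + 1)).le

lemma one_sub_div_le_sum_Ico (ha : ∀ k, 0 < a k) (hmono : Monotone a) {k m : ℕ} (hkm : k ≤ m) :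
    1 - a k / a m ≤ ∑ j ∈ Ico k m, (1 - a j / a (j + 1)) := by
  have htelescope : 1 - a k / a m = ∑ j ∈ Ico k m, (a (j + 1) - a j) / a m := by
    rw [← sum_div, sum_Ico_eq_sub _ hkm, sum_range_sub, sum_range_sub, sub_sub_sub_cancel_right,
      sub_div, div_self (ha m).ne']
  rw [htelescope]
  refine sum_le_sum fun j hj => ?_
  rw [mem_Ico] at hj
  calc (a (j + 1) - a j) / a m ≤ (a (j + 1) - a j) / a (j + 1) :=
        div_le_div_of_nonneg_left (sub_nonneg.2 (hmono j.le_succ)) (ha (j + 1)) (hmono hj.2)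
    _ = 1 - a j / a (j + 1) := by rw [sub_div, div_self (ha (j + 1)).ne']

lemma not_summable_one_sub_div_succ (ha : ∀ k, 0 < a k) (hmono : Monotone a)
    (hlim : Tendsto a atTop atTop) : ¬ Summable fun k => 1 - a k / a (k + 1) := by
  intro hsum
  obtain ⟨k, hk⟩ := Metric.cauchySeq_iff'.1 hsum.hasSum.tendsto_sum_nat.cauchySeq (1 / 2) one_half_pos
  obtain ⟨m, hm, hkm⟩ := ((hlim.eventually_ge_atTop (2 * a k)).and (eventually_ge_atTop k)).exists
  have hhalf : a k / a m ≤ 1 / 2 := by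
    rw [div_le_iff₀ (ha m)]
    linarith
  have hdist := hk m hkm
  rw [Real.dist_eq, ← sum_Ico_eq_sub _ hkm, abs_lt] at hdist
  linarith [one_sub_div_le_sum_Ico ha hmono hkm]

end

open Filter in
theorem stmt_2 (n : ℕ → ℕ) (hpos : ∀ k, 1 ≤ n k)
    (hmono : ∀ k, n k ≤ n (k + 1))
    (hlim : Tendsto n atTop atTop) :
    Tendsto (fun M => ∑ k ∈ Finset.range M, (1 - (n k : ℝ) / (n (k + 1) : ℝ)))
      atTop atTop := by
  have ha : ∀ k, (0 : ℝ) < n k := fun k => Nat.cast_pos.2 (hpos k)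
  have hmonoR : Monotone fun k => (n k : ℝ) :=
    monotone_nat_of_le_succ fun k => Nat.cast_le.2 (hmono k)
  exact (not_summable_iff_tendsto_nat_atTop_of_nonneg (one_sub_div_succ_nonneg ha hmonoR)).1
    (not_summable_one_sub_div_succ ha hmonoR (tendsto_natCast_atTop_atTop.comp hlim))
end

section
/- For positive integers n < m, one has (2/π)(1 - n/m) ≤ sup over γ on the unit circle of |(1/n)∑_{k=1}^n γ^k − (1/m)∑_{k=1}^m γ^k|. -/
/-!
Take γ = exp(iπ/n), so that γⁿ = -1. Summing the geometric series, the difference of the two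
averages is γ/(γ - 1) · ((γⁿ - 1)/n - (γᵐ - 1)/m), whose second factor has modulus at least
2/n - 2/m, while the chord |γ - 1| is at most the arc length π/n.
-/

open Finset Complex

section Field

variable {K : Type*} [Field K]

theorem sum_Icc_one_pow_eq {γ : K} (hγ : γ ≠ 1) (j : ℕ) :
    ∑ k ∈ Icc 1 j, γ ^ k = γ * (γ ^ j - 1) / (γ - 1) := by
  rw [← Ico_add_one_right_eq_Icc, sum_Ico_eq_sum_range]
  simp_rw [add_comm 1, pow_succ', ← mul_sum, geom_sum_eq hγ, Nat.add_sub_cancel, mul_div_assoc]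

theorem average_pow_eq {γ : K} (hγ : γ ≠ 1) (j : ℕ) :
    1 / (j : K) * ∑ k ∈ Icc 1 j, γ ^ k = γ / (γ - 1) * ((γ ^ j - 1) / j) := by
  rw [sum_Icc_one_pow_eq hγ]
  ring

end Field

theorem norm_average_pow_le_one {γ : ℂ} (hγ : ‖γ‖ ≤ 1) (j : ℕ) :
    ‖1 / (j : ℂ) * ∑ k ∈ Icc 1 j, γ ^ k‖ ≤ 1 := by
  have hsum : ‖∑ k ∈ Icc 1 j, γ ^ k‖ ≤ j := by
    calc ‖∑ k ∈ Icc 1 j, γ ^ k‖ ≤ ∑ k ∈ Icc 1 j, ‖γ ^ k‖ := norm_sum_le _ _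
      _ ≤ ∑ k ∈ Icc 1 j, 1 := sum_le_sum fun k _ => by
          rw [norm_pow]; exact pow_le_one₀ (norm_nonneg γ) hγ
      _ = j := by simp
  rw [norm_mul, norm_div, norm_one, norm_natCast]
  calc 1 / (j : ℝ) * ‖∑ k ∈ Icc 1 j, γ ^ k‖ ≤ 1 / j * j := by gcongr
    _ ≤ 1 := by
      rcases j.eq_zero_or_pos with rfl | hj
      · simp
      · rw [one_div_mul_cancel (by positivity)]

theorem norm_exp_I_mul_ofReal_sub_one_le (x : ℝ) : ‖exp (I * x) - 1‖ ≤ |x| := by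
  rw [norm_exp_I_mul_ofReal_sub_one, norm_mul, Real.norm_ofNat, Real.norm_eq_abs]
  linarith [Real.abs_sin_le_abs (x := x / 2), abs_div x (2 : ℝ), abs_two (α := ℝ)]

theorem norm_average_sub_average_le_two {γ : ℂ} (hγ : ‖γ‖ ≤ 1) (n m : ℕ) :
    ‖1 / (n : ℂ) * ∑ k ∈ Icc 1 n, γ ^ k
      - 1 / (m : ℂ) * ∑ k ∈ Icc 1 m, γ ^ k‖ ≤ 2 := by
  calc _ ≤ _ := norm_sub_le _ _
    _ ≤ 1 + 1 := add_le_add (norm_average_pow_le_one hγ n) (norm_average_pow_le_one hγ m)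
    _ = 2 := one_add_one_eq_two

theorem div_norm_sub_one_le_norm_average_sub_average {γ : ℂ} (hγ : ‖γ‖ = 1)
    {n : ℕ} (hγn : γ ^ n = -1) (m : ℕ) :
    (2 / n - 2 / m) / ‖γ - 1‖ ≤
      ‖1 / (n : ℂ) * ∑ k ∈ Icc 1 n, γ ^ k
        - 1 / (m : ℂ) * ∑ k ∈ Icc 1 m, γ ^ k‖ := by
  have hγ1 : γ ≠ 1 := by
    rintro rfl
    norm_num at hγn
  have hfactor : 2 / n - 2 / m ≤ ‖(γ ^ n - 1) / n - (γ ^ m - 1) / m‖ := by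
    have hm : ‖(γ ^ m - 1) / m‖ ≤ 2 / m := by
      rw [norm_div, norm_natCast]
      gcongr
      calc ‖γ ^ m - 1‖ ≤ ‖γ ^ m‖ + ‖(1 : ℂ)‖ := norm_sub_le _ _
        _ = 2 := by rw [norm_pow, hγ]; norm_num
    have hn : ‖(γ ^ n - 1) / n‖ = 2 / n := by
      rw [hγn, norm_div, norm_natCast]
      norm_num
    linarith [norm_sub_norm_le ((γ ^ n - 1) / n) ((γ ^ m - 1) / m)]
  rw [average_pow_eq hγ1, average_pow_eq hγ1, ← mul_sub, norm_mul, norm_div, hγ,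
    ← mul_div_right_comm, one_mul]
  gcongr

theorem stmt_3 (n m : ℕ) (hn : 0 < n) (hnm : n < m) :
    (2 / Real.pi) * (1 - (n : ℝ) / (m : ℝ)) ≤
      sSup {x : ℝ | ∃ γ : ℂ, ‖γ‖ = 1 ∧
        x = ‖(1 / (n : ℂ)) * ∑ k ∈ Finset.Icc 1 n, γ ^ k
          - (1 / (m : ℂ)) * ∑ k ∈ Finset.Icc 1 m, γ ^ k‖} := by
  set γ := exp (I * ↑(Real.pi / n))
  have hγ : ‖γ‖ = 1 := norm_exp_I_mul_ofReal _
  have hγn : γ ^ n = -1 := by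
    rw [← exp_nat_mul, ← exp_pi_mul_I]
    congr 1
    push_cast
    field_simp [(Nat.cast_ne_zero (R := ℂ)).2 hn.ne']
  have hchord : ‖γ - 1‖ ≤ Real.pi / n :=
    (norm_exp_I_mul_ofReal_sub_one_le _).trans_eq (abs_of_pos (by positivity))
  have hbound : (2 / Real.pi) * (1 - (n : ℝ) / m) ≤ (2 / n - 2 / m) / ‖γ - 1‖ := by
    have hγ1 : 0 < ‖γ - 1‖ := norm_pos_iff.2 fun h => by norm_num [sub_eq_zero.1 h] at hγn
    have hgap : (0 : ℝ) ≤ 2 / n - 2 / m := sub_nonneg.2 (by gcongr)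
    calc (2 / Real.pi) * (1 - (n : ℝ) / m) = (2 / n - 2 / m) / (Real.pi / n) := by
          field_simp
      _ ≤ (2 / n - 2 / m) / ‖γ - 1‖ := div_le_div_of_nonneg_left hgap hγ1 hchord
  refine hbound.trans ((div_norm_sub_one_le_norm_average_sub_average hγ hγn m).trans
    (le_csSup ⟨2, ?_⟩ ⟨γ, hγ, rfl⟩))
  rintro _ ⟨δ, hδ, rfl⟩
  exact norm_average_sub_average_le_two hδ.le n m
end

section
/- Let 0 < a < b < 1 and define g(t) = sin(a t)/(a t) − sin(b t)/(b t) (extended by its limit at 0). Then sup_{t ∈ ℝ} |g(t)| ≤ (1/(1−b)) · sup_{ℓ ∈ ℤ} |g(ℓ)|. -/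
/-!
Write `g = sinc (a ·) - sinc (b ·)`. Since `∂/∂c sinc (c x) = (cos (c x) - sinc (c x)) / c` and both
`cos` and `sinc` are 1-Lipschitz, the mixed difference `g t - g s` is at most `2 (b - a) |t - s|`;
rounding `t` to the nearest integer gives `sup_ℝ |g| ≤ sup_ℤ |g| + (b - a)`, an explicit substitute
for Bernstein's inequality. On the other hand `g (π / b) = sinc (π a / b) ≥ 1 - a / b` because
`sin x ≥ x (π - x) / π` on `[0, π]`, so `b - a ≤ b sup_ℝ |g|`. Combining the two bounds gives
`(1 - b) sup_ℝ |g| ≤ sup_ℤ |g|`.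
-/
open Real Asymptotics Filter Topology

namespace Real

theorem abs_one_sub_sinc_le (x : ℝ) : |1 - sinc x| ≤ x ^ 2 / 6 := by
  rcases eq_or_ne x 0 with rfl | hx
  · simp
  have hx' : 0 < |x| := abs_pos.2 hx
  rw [sinc_of_ne_zero hx, one_sub_div hx, abs_div, div_le_iff₀ hx']
  calc |x - sin x| ≤ |x| ^ 3 / 6 := abs_sub_sin_le x
    _ = x ^ 2 / 6 * |x| := by rw [← sq_abs x]; ring

theorem hasDerivAt_sinc_zero : HasDerivAt sinc 0 0 := by
  rw [hasDerivAt_iff_isLittleO_nhds_zero]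
  refine IsBigO.trans_isLittleO (g := fun h : ℝ => h ^ 2) ?_ (isLittleO_pow_id one_lt_two)
  refine IsBigO.of_bound (1 / 6) (Eventually.of_forall fun h => ?_)
  have := abs_one_sub_sinc_le h
  simp only [zero_add, sinc_zero, smul_zero, sub_zero, norm_eq_abs, abs_pow, sq_abs]
  rw [abs_sub_comm]; linarith

-- At `x = 0` the formula reads `0 / 0 = 0`, which is the true derivative.
theorem hasDerivAt_sinc (x : ℝ) : HasDerivAt sinc ((cos x - sinc x) / x) x := by
  rcases eq_or_ne x 0 with rfl | hx
  · simpa using hasDerivAt_sinc_zero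
  have h := (hasDerivAt_sin x).div (hasDerivAt_id x) hx
  refine (h.congr_of_eventuallyEq ?_).congr_deriv ?_
  · filter_upwards [eventually_ne_nhds hx] with y hy using sinc_of_ne_zero hy
  · rw [sinc_of_ne_zero hx]; simp only [id]; field_simp

theorem abs_cos_sub_sinc_le (x : ℝ) : |cos x - sinc x| ≤ x ^ 2 / 2 := by
  have h1 := one_sub_sq_div_two_le_cos (x := x)
  have h2 := (abs_le.1 (abs_one_sub_sinc_le x)).2
  rw [abs_le]; constructor <;> nlinarith [cos_le_one x, sinc_le_one x, sq_nonneg x]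

theorem abs_cos_sub_sinc_div_le_one (x : ℝ) : |(cos x - sinc x) / x| ≤ 1 := by
  rcases eq_or_ne x 0 with rfl | hx
  · simp
  have hx' : 0 < |x| := abs_pos.2 hx
  rw [abs_div, div_le_one hx']
  rcases le_total |x| 2 with h | h
  · calc |cos x - sinc x| ≤ x ^ 2 / 2 := abs_cos_sub_sinc_le x
      _ = |x| * |x| / 2 := by rw [← sq_abs x]; ring
      _ ≤ |x| := by nlinarith
  · calc |cos x - sinc x| ≤ |cos x| + |sinc x| := abs_sub _ _
      _ ≤ 1 + 1 := add_le_add (abs_cos_le_one x) (abs_sinc_le_one x)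
      _ ≤ |x| := by linarith

theorem lipschitzWith_sinc : LipschitzWith 1 sinc :=
  lipschitzWith_of_nnnorm_deriv_le (fun x => (hasDerivAt_sinc x).differentiableAt) fun x => by
    rw [(hasDerivAt_sinc x).deriv, ← NNReal.coe_le_coe, coe_nnnorm, norm_eq_abs]
    exact abs_cos_sub_sinc_div_le_one x

theorem abs_sinc_sub_sinc_le (x y : ℝ) : |sinc x - sinc y| ≤ |x - y| := by
  simpa [edist_dist] using! lipschitzWith_sinc x y

theorem hasDerivAt_sinc_mul_const (x : ℝ) {c : ℝ} (hc : c ≠ 0) :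
    HasDerivAt (fun c => sinc (c * x)) ((cos (c * x) - sinc (c * x)) / c) c := by
  have h := (hasDerivAt_sinc (c * x)).comp c ((hasDerivAt_id c).mul_const x)
  refine h.congr_deriv ?_
  rcases eq_or_ne x 0 with rfl | hx
  · simp
  · simp only [one_mul]; field_simp

theorem abs_sinc_mul_sub_sinc_mul_sub_le {a b : ℝ} (ha : 0 < a) (hab : a ≤ b) (t s : ℝ) :
    |(sinc (a * t) - sinc (b * t)) - (sinc (a * s) - sinc (b * s))| ≤ 2 * (b - a) * |t - s| := by
  set F : ℝ → ℝ := fun c => sinc (c * t) - sinc (c * s)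
  have hF : ∀ c ∈ Set.Icc a b, HasDerivWithinAt F
      ((cos (c * t) - sinc (c * t)) / c - (cos (c * s) - sinc (c * s)) / c) (Set.Icc a b) c :=
    fun c hc => ((hasDerivAt_sinc_mul_const t (ha.trans_le hc.1).ne').sub
      (hasDerivAt_sinc_mul_const s (ha.trans_le hc.1).ne')).hasDerivWithinAt
  have hF' : ∀ c ∈ Set.Icc a b,
      ‖(cos (c * t) - sinc (c * t)) / c - (cos (c * s) - sinc (c * s)) / c‖ ≤ 2 * |t - s| := by
    intro c hc
    have hc0 : 0 < c := ha.trans_le hc.1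
    rw [norm_eq_abs, ← sub_div, abs_div, abs_of_pos hc0, div_le_iff₀ hc0]
    calc |cos (c * t) - sinc (c * t) - (cos (c * s) - sinc (c * s))|
        ≤ |cos (c * t) - cos (c * s)| + |sinc (c * t) - sinc (c * s)| := by
          rw [sub_sub_sub_comm]; exact abs_sub _ _
      _ ≤ |c * t - c * s| + |c * t - c * s| :=
          add_le_add (abs_cos_sub_cos_le _ _) (abs_sinc_sub_sinc_le _ _)
      _ = 2 * |t - s| * c := by rw [← mul_sub, abs_mul, abs_of_pos hc0]; ring
  have := (convex_Icc a b).norm_image_sub_le_of_norm_hasDerivWithin_le hF hF'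
    (Set.right_mem_Icc.2 hab) (Set.left_mem_Icc.2 hab)
  rw [norm_eq_abs, norm_eq_abs, abs_sub_comm a, abs_of_nonneg (sub_nonneg.2 hab)] at this
  calc _ = |F a - F b| := by simp only [F]; ring_nf
    _ ≤ 2 * |t - s| * (b - a) := this
    _ = 2 * (b - a) * |t - s| := by ring

theorem mul_pi_sub_div_pi_le_sin {x : ℝ} (h0 : 0 ≤ x) (hπ : x ≤ π) :
    x * (π - x) / π ≤ sin x := by
  wlog hx : x ≤ π / 2 generalizing x
  · have := this (sub_nonneg.2 hπ) (by linarith) (by linarith)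
    rwa [sin_pi_sub, sub_sub_cancel, mul_comm] at this
  have hxπ : x * π ≤ 6 := by nlinarith [pi_lt_d2, pi_pos]
  rw [div_le_iff₀ pi_pos]
  nlinarith [sin_ge_sub_cube h0, mul_nonneg (sq_nonneg x) (sub_nonneg.2 hxπ), pi_pos]

theorem one_sub_le_sinc_mul_pi {r : ℝ} (h0 : 0 ≤ r) (h1 : r ≤ 1) : 1 - r ≤ sinc (r * π) := by
  rcases h0.eq_or_lt with rfl | hr
  · simp
  have hx : 0 < r * π := mul_pos hr pi_pos
  have := mul_pi_sub_div_pi_le_sin hx.le (by nlinarith [pi_pos])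
  rw [sinc_of_ne_zero hx.ne', le_div_iff₀ hx]
  calc (1 - r) * (r * π) = r * π * (π - r * π) / π := by field_simp
    _ ≤ sin (r * π) := this

end Real

theorem sSup_abs_le_sSup_abs_int_add {f : ℝ → ℝ} {C δ : ℝ} (hC : ∀ t, |f t| ≤ C)
    (hδ : ∀ t, |f t - f (round t)| ≤ δ) :
    sSup {x : ℝ | ∃ t : ℝ, x = |f t|} ≤ sSup {x : ℝ | ∃ ℓ : ℤ, x = |f (ℓ : ℝ)|} + δ := by
  have hbdd : BddAbove {x : ℝ | ∃ ℓ : ℤ, x = |f (ℓ : ℝ)|} := ⟨C, by rintro _ ⟨ℓ, rfl⟩; exact hC ℓ⟩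
  refine csSup_le ⟨_, 0, rfl⟩ ?_
  rintro _ ⟨t, rfl⟩
  linarith [abs_sub_abs_le_abs_sub (f t) (f (round t)), le_csSup hbdd ⟨round t, rfl⟩, hδ t]

theorem stmt_4 (a b : ℝ) (ha : 0 < a) (hab : a < b) (hb : b < 1)
    (g : ℝ → ℝ)
    (hg : ∀ t : ℝ, t ≠ 0 →
      g t = Real.sin (a * t) / (a * t) - Real.sin (b * t) / (b * t))
    (hg0 : g 0 = 0) :
    sSup {x : ℝ | ∃ t : ℝ, x = |g t|} ≤
      (1 / (1 - b)) * sSup {x : ℝ | ∃ ℓ : ℤ, x = |g (ℓ : ℝ)|} := by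
  have hb0 : 0 < b := ha.trans hab
  have hg_sinc : ∀ t, g t = sinc (a * t) - sinc (b * t) := by
    intro t
    rcases eq_or_ne t 0 with rfl | ht
    · simp [hg0]
    · rw [hg t ht, sinc_of_ne_zero (by positivity), sinc_of_ne_zero (by positivity)]
  have hC : ∀ t, |g t| ≤ 2 := fun t => by
    rw [hg_sinc]
    linarith [abs_sub (sinc (a * t)) (sinc (b * t)), abs_sinc_le_one (a * t), abs_sinc_le_one (b * t)]
  have h_round : sSup {x : ℝ | ∃ t : ℝ, x = |g t|} ≤
      sSup {x : ℝ | ∃ ℓ : ℤ, x = |g (ℓ : ℝ)|} + (b - a) := by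
    refine sSup_abs_le_sSup_abs_int_add hC fun t => ?_
    rw [hg_sinc, hg_sinc]
    nlinarith [abs_sinc_mul_sub_sinc_mul_sub_le ha hab.le t (round t), abs_sub_round t]
  have h_lower : b - a ≤ b * sSup {x : ℝ | ∃ t : ℝ, x = |g t|} := by
    have hval : g (π / b) = sinc (a / b * π) := by
      rw [hg_sinc, mul_div_cancel₀ π hb0.ne', sinc_of_ne_zero pi_ne_zero, sin_pi, zero_div,
        sub_zero, mul_div_assoc', div_mul_eq_mul_div]
    have hsup : |g (π / b)| ≤ sSup {x : ℝ | ∃ t : ℝ, x = |g t|} :=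
      le_csSup ⟨2, by rintro _ ⟨t, rfl⟩; exact hC t⟩ ⟨π / b, rfl⟩
    calc b - a = b * (1 - a / b) := by field_simp
      _ ≤ b * g (π / b) := by
          rw [hval]
          gcongr
          exact one_sub_le_sinc_mul_pi (div_nonneg ha.le hb0.le) ((div_le_one hb0).2 hab.le)
      _ ≤ _ := by gcongr; exact (le_abs_self _).trans hsup
  rw [one_div_mul_eq_div, le_div_iff₀ (by linarith)]
  linarith
end

section
/- Let m_n(γ) = (1/n)∑_{k=1}^n γ^k for γ on the unit circle. Fix γ ≠ 1 with |γ| = 1. Then ∑_{k=1}^∞ |m_{k+1}(γ) − m_k(γ)| = ∞. -/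
/-!
The geometric sums `∑_{k=1}^n γ^k = γ (γ^n - 1)/(γ - 1)` are bounded by `2/|γ - 1|`, so the Cesàro
means `m_n(γ)` tend to `0`. From `m_{n+1} - m_n = (γ^{n+1} - m_n)/(n+1)` and `|γ^{n+1}| = 1` we get
`|m_{n+1} - m_n| ≥ 1/(2(n+1))` for large `n`, and the harmonic series diverges.
-/

open Filter Topology Finset

noncomputable def cesaroMean (γ : ℂ) (n : ℕ) : ℂ :=
  (1 / (n : ℂ)) * ∑ k ∈ Icc 1 n, γ ^ k

lemma not_summable_of_eventually_div_succ_le {f : ℕ → ℝ} {c : ℝ} (hc : 0 < c)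
    (h : ∀ᶠ n in atTop, c / (n + 1) ≤ f n) : ¬ Summable f := by
  intro hf
  have hharmonic : Summable fun n : ℕ => 1 / ((n + 1 : ℕ) : ℝ) := by
    refine (hf.mul_left c⁻¹).of_norm_bounded_eventually_nat ?_
    filter_upwards [h] with n hn
    rw [Real.norm_of_nonneg (by positivity), Nat.cast_succ]
    calc 1 / ((n : ℝ) + 1) = c⁻¹ * (c / (n + 1)) := by field_simp
      _ ≤ c⁻¹ * f n := by gcongr
  exact Real.not_summable_one_div_natCast ((summable_nat_add_iff 1).1 hharmonic)

section CesaroMean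

variable {γ : ℂ}

lemma norm_sum_Icc_pow_le (hγ : ‖γ‖ ≤ 1) (hγ1 : γ ≠ 1) (n : ℕ) :
    ‖∑ k ∈ Icc 1 n, γ ^ k‖ ≤ 2 / ‖γ - 1‖ := by
  have hgeom : ∑ k ∈ Icc 1 n, γ ^ k = γ * ((γ ^ n - 1) / (γ - 1)) := by
    rw [← geom_sum_eq hγ1 n, mul_sum, ← Ico_add_one_right_eq_Icc, sum_Ico_eq_sum_range]
    simp only [Nat.add_sub_cancel, pow_succ', add_comm 1]
  have hpow : ‖γ ^ n - 1‖ ≤ 2 :=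
    calc ‖γ ^ n - 1‖ ≤ ‖γ‖ ^ n + ‖(1 : ℂ)‖ := (norm_sub_le _ _).trans_eq (by rw [norm_pow])
      _ ≤ 1 + 1 := by gcongr; exacts [pow_le_one₀ (norm_nonneg γ) hγ, norm_one.le]
      _ = 2 := by norm_num
  rw [hgeom, norm_mul, norm_div]
  calc ‖γ‖ * (‖γ ^ n - 1‖ / ‖γ - 1‖) ≤ 1 * (2 / ‖γ - 1‖) := by gcongr
    _ = 2 / ‖γ - 1‖ := one_mul _

lemma tendsto_cesaroMean_zero (hγ : ‖γ‖ ≤ 1) (hγ1 : γ ≠ 1) :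
    Tendsto (cesaroMean γ) atTop (𝓝 0) := by
  have hbound : ∀ n : ℕ, ‖cesaroMean γ n‖ ≤ 2 / ‖γ - 1‖ * (1 / n) := fun n => by
    rw [cesaroMean, norm_mul, norm_div, norm_one, Complex.norm_natCast, mul_comm]
    gcongr
    exact norm_sum_Icc_pow_le hγ hγ1 n
  refine squeeze_zero_norm hbound ?_
  simpa using tendsto_one_div_atTop_nhds_zero_nat.const_mul (2 / ‖γ - 1‖)

lemma cesaroMean_succ_sub (γ : ℂ) (n : ℕ) :
    cesaroMean γ (n + 1) - cesaroMean γ n = 1 / (n + 1 : ℂ) * (γ ^ (n + 1) - cesaroMean γ n) := by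
  rcases n.eq_zero_or_pos with rfl | hn
  · simp [cesaroMean]
  have hn0 : (n : ℂ) ≠ 0 := Nat.cast_ne_zero.2 hn.ne'
  have hn1 : (n + 1 : ℂ) ≠ 0 := by exact_mod_cast n.succ_ne_zero
  simp only [cesaroMean, sum_Icc_succ_top (Nat.le_add_left 1 n), Nat.cast_succ]
  field_simp
  ring

lemma div_succ_le_norm_cesaroMean_succ_sub (hγ : ‖γ‖ = 1) {n : ℕ}
    (hsmall : ‖cesaroMean γ n‖ ≤ 1 / 2) :
    1 / 2 / (n + 1) ≤ ‖cesaroMean γ (n + 1) - cesaroMean γ n‖ := by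
  have hfar : 1 / 2 ≤ ‖γ ^ (n + 1) - cesaroMean γ n‖ :=
    calc (1 : ℝ) / 2 ≤ ‖γ ^ (n + 1)‖ - ‖cesaroMean γ n‖ := by
          rw [norm_pow, hγ, one_pow]; linarith
      _ ≤ ‖γ ^ (n + 1) - cesaroMean γ n‖ := norm_sub_norm_le _ _
  have hnorm : ‖(n + 1 : ℂ)‖ = n + 1 := by exact_mod_cast Complex.norm_natCast (n + 1)
  rw [cesaroMean_succ_sub, norm_mul, norm_div, norm_one, hnorm, div_eq_mul_one_div, mul_comm]
  gcongr

theorem not_summable_norm_cesaroMean_succ_sub (hγ : ‖γ‖ = 1) (hγ1 : γ ≠ 1) :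
    ¬ Summable fun n => ‖cesaroMean γ (n + 1) - cesaroMean γ n‖ := by
  have hsmall : ∀ᶠ n in atTop, ‖cesaroMean γ n‖ ≤ 1 / 2 :=
    (tendsto_cesaroMean_zero hγ.le hγ1).norm.eventually (ge_mem_nhds (by norm_num))
  exact not_summable_of_eventually_div_succ_le (by norm_num)
    (hsmall.mono fun n => div_succ_le_norm_cesaroMean_succ_sub hγ)

end CesaroMean

open Filter in
theorem stmt_8 (γ : ℂ) (hγ : ‖γ‖ = 1) (hγ1 : γ ≠ 1)
    (m : ℕ → ℂ → ℂ)
    (hm : ∀ n γ', m n γ' = (1 / (n : ℂ)) * ∑ k ∈ Finset.Icc 1 n, γ' ^ k) :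
    Tendsto (fun M => ∑ k ∈ Finset.range M,
        ‖m (k + 2) γ - m (k + 1) γ‖) atTop atTop := by
  have hm' : ∀ n, m n γ = cesaroMean γ n := fun n => hm n γ
  simp only [hm']
  rw [← not_summable_iff_tendsto_nat_atTop_of_nonneg fun _ => norm_nonneg _]
  exact mt (summable_nat_add_iff (f := fun n => ‖cesaroMean γ (n + 1) - cesaroMean γ n‖) 1).1
    (not_summable_norm_cesaroMean_succ_sub hγ hγ1)
end

section
/- Let m_n(γ) = (1/n)∑_{k=1}^n γ^k and n_k = 2^k. Then sup over γ on the unit circle of ∑_{k=1}^∞ |m_{n_{k+1}}(γ) − m_{n_k}(γ)| is finite; in fact it is at most 20. -/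
/-!
Write `δ = ‖γ - 1‖`. Since `γ ^ k` stays within `k δ` of `1`, the mean `m_n(γ)` of
`γ, …, γ ^ n` is within `n δ` of `1`; since `(γ - 1) ∑_{k=1}^n γ ^ k = γ ^ (n+1) - γ`,
it is also at most `2 / (n δ)`. Hence the `k`-th term of the series is at most
`3 min (2 ^ (k+1) δ, 1 / (2 ^ (k+1) δ))`, and the sum of these minima is a geometric series
on either side of the index where `2 ^ (k+1) δ` crosses `1`; it is at most `4`, so the series
is at most `12`.
-/

open Finset

theorem norm_pow_sub_one_le {R : Type*} [SeminormedRing R] {γ : R} (hγ : ‖γ‖ ≤ 1) (k : ℕ) :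
    ‖γ ^ k - 1‖ ≤ k * ‖γ - 1‖ := by
  induction k with
  | zero => simp
  | succ k ih =>
    calc ‖γ ^ (k + 1) - 1‖ = ‖γ * (γ ^ k - 1) + (γ - 1)‖ := by rw [pow_succ']; noncomm_ring
      _ ≤ ‖γ‖ * ‖γ ^ k - 1‖ + ‖γ - 1‖ := (norm_add_le _ _).trans (by gcongr; exact norm_mul_le _ _)
      _ ≤ (k + 1 : ℕ) * ‖γ - 1‖ := by
        push_cast
        nlinarith [norm_nonneg (γ ^ k - 1), norm_nonneg (γ - 1)]

theorem norm_sum_Icc_pow_mul_norm_sub_one_le {R : Type*} [NormedDivisionRing R] {γ : R}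
    (hγ : ‖γ‖ ≤ 1) (n : ℕ) : ‖∑ k ∈ Icc 1 n, γ ^ k‖ * ‖γ - 1‖ ≤ 2 := by
  rw [← norm_mul, ← Ico_add_one_right_eq_Icc, geom_sum_Ico_mul _ (by omega), pow_one]
  calc ‖γ ^ (n + 1) - γ‖ ≤ ‖γ ^ (n + 1)‖ + ‖γ‖ := norm_sub_le _ _
    _ ≤ 2 := by rw [norm_pow]; nlinarith [pow_le_one₀ (norm_nonneg γ) hγ (n := n + 1)]

noncomputable def powMean {𝕜 : Type*} [RCLike 𝕜] (n : ℕ) (γ : 𝕜) : 𝕜 :=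
  (n : 𝕜)⁻¹ * ∑ k ∈ Icc 1 n, γ ^ k

section powMean

variable {𝕜 : Type*} [RCLike 𝕜] {γ : 𝕜}

theorem powMean_one {n : ℕ} (hn : 0 < n) : powMean n (1 : 𝕜) = 1 := by
  simp [powMean, hn.ne']

theorem norm_powMean_sub_one_le (hγ : ‖γ‖ ≤ 1) {n : ℕ} (hn : 0 < n) :
    ‖powMean n γ - 1‖ ≤ n * ‖γ - 1‖ := by
  have hn' : (n : 𝕜) ≠ 0 := Nat.cast_ne_zero.mpr hn.ne'
  have hmean : powMean n γ - 1 = (n : 𝕜)⁻¹ * ∑ k ∈ Icc 1 n, (γ ^ k - 1) := by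
    simp [powMean, sum_sub_distrib, mul_sub, hn']
  have hsum : ‖∑ k ∈ Icc 1 n, (γ ^ k - 1)‖ ≤ n * (n * ‖γ - 1‖) :=
    calc ‖∑ k ∈ Icc 1 n, (γ ^ k - 1)‖ ≤ ∑ k ∈ Icc 1 n, ‖γ ^ k - 1‖ := norm_sum_le _ _
      _ ≤ ∑ _k ∈ Icc 1 n, n * ‖γ - 1‖ := sum_le_sum fun k hk =>
          (norm_pow_sub_one_le hγ k).trans (by gcongr; exact_mod_cast (mem_Icc.mp hk).2)
      _ = n * (n * ‖γ - 1‖) := by simp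
  rw [hmean, norm_mul, norm_inv, RCLike.norm_natCast, inv_mul_le_iff₀ (by positivity)]
  exact hsum

theorem norm_powMean_le (hγ : ‖γ‖ ≤ 1) (h1 : γ ≠ 1) (n : ℕ) :
    ‖powMean n γ‖ ≤ 2 / (n * ‖γ - 1‖) := by
  have hδ : 0 < ‖γ - 1‖ := norm_pos_iff.mpr (sub_ne_zero.mpr h1)
  rw [powMean, norm_mul, norm_inv, RCLike.norm_natCast, div_mul_eq_div_div_swap, div_eq_inv_mul]
  gcongr
  exact (le_div_iff₀ hδ).mpr (norm_sum_Icc_pow_mul_norm_sub_one_le hγ n)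

theorem norm_powMean_two_mul_sub_le (hγ : ‖γ‖ ≤ 1) {n : ℕ} (hn : 0 < n) :
    ‖powMean (2 * n) γ - powMean n γ‖ ≤ 3 * min (n * ‖γ - 1‖) (1 / (n * ‖γ - 1‖)) := by
  rw [mul_min_of_nonneg _ _ (by norm_num), le_min_iff]
  constructor
  · calc ‖powMean (2 * n) γ - powMean n γ‖
          = ‖(powMean (2 * n) γ - 1) - (powMean n γ - 1)‖ := by rw [sub_sub_sub_cancel_right]
      _ ≤ (2 * n : ℕ) * ‖γ - 1‖ + n * ‖γ - 1‖ := (norm_sub_le _ _).trans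
          (add_le_add (norm_powMean_sub_one_le hγ (by omega)) (norm_powMean_sub_one_le hγ hn))
      _ = 3 * (n * ‖γ - 1‖) := by push_cast; ring
  · rcases eq_or_ne γ 1 with rfl | h1
    · simp [powMean_one hn, powMean_one (show 0 < 2 * n by omega)]
    · calc ‖powMean (2 * n) γ - powMean n γ‖ ≤ ‖powMean (2 * n) γ‖ + ‖powMean n γ‖ :=
            norm_sub_le _ _
        _ ≤ 2 / ((2 * n : ℕ) * ‖γ - 1‖) + 2 / (n * ‖γ - 1‖) :=
            add_le_add (norm_powMean_le hγ h1 _) (norm_powMean_le hγ h1 n)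
        _ = 3 * (1 / (n * ‖γ - 1‖)) := by push_cast; field_simp; ring

end powMean

theorem sum_range_min_two_pow_mul_le {t : ℝ} (ht : 0 ≤ t) (M : ℕ) :
    ∑ k ∈ range M, min (2 ^ k * t) (1 / (2 ^ k * t)) ≤ 4 := by
  -- The bound `g t` on the right satisfies `min t t⁻¹ + g (2 t) ≤ g t`.
  suffices key : ∀ M : ℕ, ∀ t : ℝ, 0 ≤ t →
      ∑ k ∈ range M, min (2 ^ k * t) (1 / (2 ^ k * t)) ≤ if t ≤ 1 then 4 - 2 * t else 2 / t by
    refine (key M t ht).trans ?_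
    split_ifs with h
    · linarith
    · rw [div_le_iff₀ (by linarith)]; linarith
  intro M
  induction M with
  | zero =>
    intro t ht
    split_ifs with h
    · simp only [range_zero, sum_empty]; linarith
    · simp only [range_zero, sum_empty]; positivity
  | succ M ih =>
    intro t ht
    have hshift : ∑ k ∈ range (M + 1), min (2 ^ k * t) (1 / (2 ^ k * t))
        = min t (1 / t) + ∑ k ∈ range M, min (2 ^ k * (2 * t)) (1 / (2 ^ k * (2 * t))) := by
      rw [sum_range_succ', add_comm]
      simp only [pow_succ, mul_assoc, pow_zero, one_mul]
    rw [hshift]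
    have hrec := ih (2 * t) (by positivity)
    rcases le_or_gt t (1 / 2) with hsmall | hmid
    · rw [if_pos (by linarith : 2 * t ≤ 1)] at hrec
      rw [if_pos (by linarith)]
      linarith [min_le_left t (1 / t)]
    rw [if_neg (by linarith : ¬ 2 * t ≤ 1), div_mul_cancel_left₀ two_ne_zero, ← one_div] at hrec
    split_ifs with hle
    · have : 1 / t ≤ 4 - 3 * t := by
        rw [div_le_iff₀ (by linarith)]; nlinarith
      linarith [min_le_left t (1 / t)]
    · linarith [min_le_right t (1 / t), show 2 / t = 1 / t + 1 / t by ring]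

theorem stmt_9 (m : ℕ → ℂ → ℂ)
    (hm : ∀ n γ, m n γ = (1 / (n : ℂ)) * ∑ k ∈ Finset.Icc 1 n, γ ^ k) :
    ∀ γ : ℂ, ‖γ‖ = 1 → ∀ M : ℕ,
      ∑ k ∈ Finset.range M,
        ‖m (2 ^ (k + 2)) γ - m (2 ^ (k + 1)) γ‖ ≤ 20 := by
  intro γ hγ M
  obtain rfl : m = powMean := funext₂ fun n γ => by rw [hm, powMean, one_div]
  have hterm (k : ℕ) : ‖powMean (2 ^ (k + 2)) γ - powMean (2 ^ (k + 1)) γ‖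
      ≤ 3 * min (2 ^ k * (2 * ‖γ - 1‖)) (1 / (2 ^ k * (2 * ‖γ - 1‖))) := by
    have h := norm_powMean_two_mul_sub_le hγ.le (n := 2 ^ (k + 1)) (by positivity)
    rw [show 2 ^ (k + 2) = 2 * 2 ^ (k + 1) by ring]
    convert h using 3 <;> push_cast <;> ring
  calc ∑ k ∈ range M, ‖powMean (2 ^ (k + 2)) γ - powMean (2 ^ (k + 1)) γ‖
      ≤ ∑ k ∈ range M, 3 * min (2 ^ k * (2 * ‖γ - 1‖)) (1 / (2 ^ k * (2 * ‖γ - 1‖))) :=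
        sum_le_sum fun k _ => hterm k
    _ ≤ 3 * 4 := by
        rw [← mul_sum]
        gcongr
        exact sum_range_min_two_pow_mul_le (by positivity) M
    _ ≤ 20 := by norm_num
end

section
/- For ε_k = 1/2^k, sup over ℓ ∈ ℤ of ∑_{k=1}^∞ |sin(ℓ/2^{k+1})/(ℓ/2^{k+1}) − sin(ℓ/2^k)/(ℓ/2^k)| is finite (bounded by an absolute constant such as 9). -/
/-!
With `y = t / 2 ^ k`, the `k`-th term `|sin (y/2) / (y/2) - sin y / y|` is at most `3 / |y|`
(from `|sin x| ≤ 1`) and at most `5 y² / 24` (from `|x - sin x| ≤ |x|³ / 6`). Use the first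
bound where `|y| ≥ 1` and the second where `|y| < 1`: in each range the bounds form a geometric
sequence, dominated by its extreme term, which is at most `1`; the total is `6 + 5/18 ≤ 9`.
-/

open Real Finset

lemma abs_sin_div_self_le_inv_abs (x : ℝ) : |sin x / x| ≤ |x|⁻¹ := by
  rw [abs_div, div_eq_mul_inv]
  exact mul_le_of_le_one_left (by positivity) (abs_sin_le_one x)

lemma abs_sin_div_self_sub_one_le {x : ℝ} (hx : x ≠ 0) : |sin x / x - 1| ≤ x ^ 2 / 6 := by
  have hx' : 0 < |x| := abs_pos.2 hx
  calc |sin x / x - 1| = |x - sin x| / |x| := by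
        rw [← abs_div, ← abs_neg]; congr 1; field_simp; ring
    _ ≤ |x| ^ 3 / 6 / |x| := by gcongr; exact abs_sub_sin_le x
    _ = x ^ 2 / 6 := by field_simp; rw [sq_abs]

lemma abs_sin_div_half_sub_le_inv_abs (y : ℝ) :
    |sin (y / 2) / (y / 2) - sin y / y| ≤ 3 * |y|⁻¹ :=
  calc _ ≤ |sin (y / 2) / (y / 2)| + |sin y / y| := abs_sub _ _
    _ ≤ |y / 2|⁻¹ + |y|⁻¹ :=
        add_le_add (abs_sin_div_self_le_inv_abs _) (abs_sin_div_self_le_inv_abs _)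
    _ = 3 * |y|⁻¹ := by rw [abs_div, abs_two]; ring

lemma abs_sin_div_half_sub_le_sq (y : ℝ) :
    |sin (y / 2) / (y / 2) - sin y / y| ≤ 5 / 24 * y ^ 2 := by
  rcases eq_or_ne y 0 with rfl | hy
  · simp
  calc _ = |(sin (y / 2) / (y / 2) - 1) - (sin y / y - 1)| := by ring_nf
    _ ≤ |sin (y / 2) / (y / 2) - 1| + |sin y / y - 1| := abs_sub _ _
    _ ≤ (y / 2) ^ 2 / 6 + y ^ 2 / 6 := add_le_add
        (abs_sin_div_self_sub_one_le (div_ne_zero hy two_ne_zero))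
        (abs_sin_div_self_sub_one_le hy)
    _ = 5 / 24 * y ^ 2 := by ring

lemma sum_inv_abs_div_two_pow_le (t : ℝ) {S : Finset ℕ} (hS : ∀ k ∈ S, 1 ≤ |t / 2 ^ k|) :
    ∑ k ∈ S, |t / 2 ^ k|⁻¹ ≤ 2 := by
  rcases S.eq_empty_or_nonempty with rfl | hne
  · simp
  have hpow : ∀ k ∈ S, (2 : ℝ) ^ k ≤ |t| := fun k hk => by
    have h := hS k hk
    rwa [abs_div, abs_pow, abs_two, one_le_div₀ (by positivity)] at h
  set m := S.max' hne
  have ht : 0 < |t| := (pow_pos two_pos m).trans_le (hpow m (S.max'_mem hne))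
  have hgeom : ∑ k ∈ S, (2 : ℝ) ^ k < 2 ^ (m + 1) := by
    exact_mod_cast Nat.geomSum_lt le_rfl fun k hk => Nat.lt_succ_of_le (S.le_max' k hk)
  calc ∑ k ∈ S, |t / 2 ^ k|⁻¹ = (∑ k ∈ S, (2 : ℝ) ^ k) / |t| := by
        simp [abs_div, sum_div]
    _ ≤ 2 ^ (m + 1) / |t| := by gcongr
    _ ≤ 2 := by
        rw [div_le_iff₀ ht, pow_succ']
        exact mul_le_mul_of_nonneg_left (hpow m (S.max'_mem hne)) zero_le_two

lemma sum_sq_div_two_pow_le (t : ℝ) {S : Finset ℕ} (hS : ∀ k ∈ S, |t / 2 ^ k| < 1) :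
    ∑ k ∈ S, (t / 2 ^ k) ^ 2 ≤ 4 / 3 := by
  rcases S.eq_empty_or_nonempty with rfl | hne
  · norm_num
  have hsq : ∀ k : ℕ, (t / 2 ^ k) ^ 2 = t ^ 2 * (1 / 4) ^ k := fun k => by
    rw [div_pow, ← pow_mul, mul_comm, pow_mul, div_eq_mul_one_div, one_div_pow]; norm_num
  set m := S.min' hne
  have htm : t ^ 2 * (1 / 4) ^ m < 1 := by
    rw [← hsq, ← sq_abs, sq_lt_one_iff₀ (abs_nonneg _)]
    exact hS m (S.min'_mem hne)
  have hgeom : ∑ k ∈ S, (1 / 4 : ℝ) ^ k ≤ (1 / 4) ^ m / (1 - 1 / 4) := by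
    refine le_trans ?_ (geom_sum_Ico_le_of_lt_one (n := S.max' hne + 1) (by norm_num) (by norm_num))
    refine sum_le_sum_of_subset_of_nonneg (fun k hk => ?_) fun _ _ _ => by positivity
    exact mem_Ico.2 ⟨S.min'_le k hk, Nat.lt_succ_of_le (S.le_max' k hk)⟩
  calc ∑ k ∈ S, (t / 2 ^ k) ^ 2 = t ^ 2 * ∑ k ∈ S, (1 / 4 : ℝ) ^ k := by
        simp only [hsq, mul_sum]
    _ ≤ t ^ 2 * ((1 / 4) ^ m / (1 - 1 / 4)) := by gcongr
    _ = t ^ 2 * (1 / 4) ^ m * (4 / 3) := by ring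
    _ ≤ 4 / 3 := by linarith

theorem sum_abs_sin_div_half_sub_le (t : ℝ) (M : ℕ) :
    ∑ k ∈ range M, |sin (t / 2 ^ k / 2) / (t / 2 ^ k / 2) - sin (t / 2 ^ k) / (t / 2 ^ k)| ≤ 9 := by
  rw [← sum_filter_add_sum_filter_not (range M) fun k => 1 ≤ |t / 2 ^ k|]
  have hlarge := calc
    ∑ k ∈ (range M).filter (fun k => 1 ≤ |t / 2 ^ k|),
        |sin (t / 2 ^ k / 2) / (t / 2 ^ k / 2) - sin (t / 2 ^ k) / (t / 2 ^ k)|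
      ≤ ∑ k ∈ (range M).filter (fun k => 1 ≤ |t / 2 ^ k|), 3 * |t / 2 ^ k|⁻¹ :=
        sum_le_sum fun k _ => abs_sin_div_half_sub_le_inv_abs _
    _ ≤ 3 * 2 := by
        rw [← mul_sum]
        gcongr
        exact sum_inv_abs_div_two_pow_le t fun k hk => (mem_filter.1 hk).2
  have hsmall := calc
    ∑ k ∈ (range M).filter (fun k => ¬1 ≤ |t / 2 ^ k|),
        |sin (t / 2 ^ k / 2) / (t / 2 ^ k / 2) - sin (t / 2 ^ k) / (t / 2 ^ k)|
      ≤ ∑ k ∈ (range M).filter (fun k => ¬1 ≤ |t / 2 ^ k|), 5 / 24 * (t / 2 ^ k) ^ 2 :=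
        sum_le_sum fun k _ => abs_sin_div_half_sub_le_sq _
    _ ≤ 5 / 24 * (4 / 3) := by
        rw [← mul_sum]
        gcongr
        exact sum_sq_div_two_pow_le t fun k hk => not_le.1 (mem_filter.1 hk).2
  linarith

theorem stmt_15 :
    ∀ ℓ : ℤ, ∀ M : ℕ,
      ∑ k ∈ Finset.range M,
        |Real.sin ((ℓ : ℝ) / 2 ^ (k + 2)) / ((ℓ : ℝ) / 2 ^ (k + 2))
          - Real.sin ((ℓ : ℝ) / 2 ^ (k + 1)) / ((ℓ : ℝ) / 2 ^ (k + 1))| ≤ 9 := by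
  intro ℓ M
  have hsucc : ∀ k : ℕ, (ℓ : ℝ) / 2 ^ (k + 1) = ℓ / 2 / 2 ^ k := fun k => by
    rw [pow_succ', div_div]
  have hsucc₂ : ∀ k : ℕ, (ℓ : ℝ) / 2 ^ (k + 2) = ℓ / 2 / 2 ^ k / 2 := fun k => by
    rw [← hsucc, pow_succ, div_div]
  calc _ = ∑ k ∈ range M, |sin (ℓ / 2 / 2 ^ k / 2) / (ℓ / 2 / 2 ^ k / 2)
          - sin (ℓ / 2 / 2 ^ k) / (ℓ / 2 / 2 ^ k)| :=
        sum_congr rfl fun k _ => by rw [hsucc₂, hsucc]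
    _ ≤ 9 := sum_abs_sin_div_half_sub_le _ M
end

section
/- For ε_k = 1/k, sup over positive integers ℓ of ∑_{k=1}^∞ |sin(ℓ/(k+1))/(ℓ/(k+1)) − sin(ℓ/k)/(ℓ/k)| is infinite. -/
/-!
Put `f k = sin (ℓ / (k + 1)) / (ℓ / (k + 1))`. On `[mπ + π/6, mπ + π/2]` the function
`x ↦ sin x / x` has sign `(-1)^m` and size at least `1 / (8 (m + 1))`. Once `ℓ ≥ 12 (m + 1)²`
the gaps between consecutive points `ℓ / (k + 1)` are shorter than that interval, so it contains
one of them. Taking such a sample point for each `m < K` shows that the variation of `f` is at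
least `∑_{m < K} 1 / (8 (m + 1))`, and this harmonic sum is unbounded.
-/

open Real Finset

theorem sum_range_dist_le_sum_Ico_dist {α : Type*} [PseudoMetricSpace α] (f : ℕ → α)
    {p : ℕ → ℕ} (hp : Antitone p) (K : ℕ) :
    ∑ m ∈ range K, dist (f (p (m + 1))) (f (p m)) ≤
      ∑ k ∈ Ico (p K) (p 0), dist (f k) (f (k + 1)) := by
  induction K with
  | zero => simp
  | succ K ih =>
    rw [sum_range_succ, ← sum_Ico_consecutive _ (hp K.le_succ) (hp K.zero_le), add_comm]
    exact add_le_add (dist_le_Ico_sum_dist f (hp K.le_succ)) ih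

theorem exists_lt_sum_range_div_succ {c : ℝ} (hc : 0 < c) (C : ℝ) :
    ∃ K : ℕ, C < ∑ m ∈ range K, c / (m + 1) := by
  have h := tendsto_sum_range_one_div_nat_succ_atTop.const_mul_atTop hc
  simp only [mul_sum, mul_one_div] at h
  exact (h.eventually_gt_atTop C).exists

theorem div_floor_div_add_one_mem_Icc {L a b : ℝ} (ha : 0 < a) (hab : a < b)
    (hL : a * b ≤ L * (b - a)) : L / (⌊L / b⌋₊ + 1) ∈ Set.Icc a b := by
  have hb : 0 < b := ha.trans hab
  have hL₀ : 0 < L := pos_of_mul_pos_left ((mul_pos ha hb).trans_le hL) (sub_pos.2 hab).le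
  have hfloor := Nat.floor_le (div_nonneg hL₀.le hb.le)
  have hlt := Nat.lt_floor_add_one (L / b)
  rw [le_div_iff₀ hb] at hfloor
  rw [div_lt_iff₀ hb] at hlt
  constructor
  · rw [le_div_iff₀ (by positivity)]
    nlinarith
  · rw [div_le_iff₀ (by positivity)]
    linarith

theorem one_half_le_neg_one_pow_mul_sin {m : ℕ} {x : ℝ}
    (hx : x ∈ Set.Icc (m * π + π / 6) (m * π + π / 2)) : 1 / 2 ≤ (-1) ^ m * sin x := by
  obtain ⟨y, rfl⟩ : ∃ y, x = y + m * π := ⟨x - m * π, by ring⟩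
  rw [sin_add_nat_mul_pi, ← mul_assoc, ← pow_add, Even.neg_one_pow ⟨m, rfl⟩, one_mul,
    ← sin_pi_div_six]
  exact sin_le_sin_of_le_of_le_pi_div_two (by linarith [pi_pos]) (by linarith [hx.2])
    (by linarith [hx.1])

theorem div_succ_le_neg_one_pow_mul_sin_div {m : ℕ} {x : ℝ}
    (hx : x ∈ Set.Icc (m * π + π / 6) (m * π + π / 2)) :
    1 / 8 / (m + 1) ≤ (-1) ^ m * (sin x / x) := by
  have hsin := one_half_le_neg_one_pow_mul_sin hx
  have hx₀ : 0 < x := by linarith [hx.1, pi_pos, mul_nonneg m.cast_nonneg pi_pos.le]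
  have hx₁ : x ≤ 4 * (m + 1) := by
    nlinarith [hx.2, pi_le_four, pi_pos, (m.cast_nonneg : (0 : ℝ) ≤ m)]
  rw [mul_div_assoc', le_div_iff₀ hx₀]
  calc 1 / 8 / (m + 1) * x ≤ 1 / 8 / (m + 1) * (4 * (m + 1)) := by gcongr
    _ = 1 / 2 := by field_simp; norm_num
    _ ≤ _ := hsin

theorem le_abs_sub_of_le_neg_one_pow_mul {m : ℕ} {a b c : ℝ} (ha : c ≤ (-1) ^ m * a)
    (hb : 0 ≤ (-1) ^ (m + 1) * b) : c ≤ |a - b| := by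
  calc c ≤ (-1) ^ m * (a - b) := by rw [pow_succ] at hb; linarith
    _ ≤ |(-1) ^ m * (a - b)| := le_abs_self _
    _ = |a - b| := by simp [abs_mul]

theorem stmt_16 :
    ∀ C : ℝ, ∃ ℓ : ℕ, 0 < ℓ ∧ ∃ M : ℕ,
      C < ∑ k ∈ Finset.range M,
        |Real.sin ((ℓ : ℝ) / (k + 2)) / ((ℓ : ℝ) / (k + 2))
          - Real.sin ((ℓ : ℝ) / (k + 1)) / ((ℓ : ℝ) / (k + 1))| := by
  intro C
  obtain ⟨K, hK⟩ := exists_lt_sum_range_div_succ (by norm_num : (0 : ℝ) < 1 / 8) C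
  set ℓ : ℕ := 12 * (K + 1) ^ 2
  let f : ℕ → ℝ := fun k => sin (ℓ / (k + 1)) / (ℓ / (k + 1))
  let p : ℕ → ℕ := fun m => ⌊ℓ / (m * π + π / 2)⌋₊
  have hp : Antitone p := fun m n hmn => Nat.floor_le_floor <|
    div_le_div_of_nonneg_left (by positivity) (by positivity) (by gcongr)
  have hsample : ∀ m ≤ K, 1 / 8 / (m + 1) ≤ (-1) ^ m * f (p m) := by
    intro m hm
    apply div_succ_le_neg_one_pow_mul_sin_div
    apply div_floor_div_add_one_mem_Icc (by positivity) (by linarith [pi_pos])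
    have hmK : (m : ℝ) + 1 ≤ K + 1 := by exact_mod_cast Nat.succ_le_succ hm
    calc (m * π + π / 6) * (m * π + π / 2) ≤ ((m + 1) ^ 2 * π) * π := by
          nlinarith [pi_pos, mul_nonneg m.cast_nonneg pi_pos.le]
      _ ≤ ((K + 1) ^ 2 * 4) * π := by gcongr; exact pi_le_four
      _ = ℓ * (m * π + π / 2 - (m * π + π / 6)) := by push_cast [ℓ]; ring
  refine ⟨ℓ, by positivity, p 0, ?_⟩
  calc C < ∑ m ∈ range K, 1 / 8 / ((m : ℝ) + 1) := hK
    _ ≤ ∑ m ∈ range K, dist (f (p (m + 1))) (f (p m)) := by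
      refine sum_le_sum fun m hm => ?_
      have hm := mem_range.1 hm
      rw [dist_comm, Real.dist_eq]
      exact le_abs_sub_of_le_neg_one_pow_mul (hsample m hm.le)
        ((by positivity : (0 : ℝ) ≤ 1 / 8 / ((m + 1 : ℕ) + 1)).trans (hsample (m + 1) hm))
    _ ≤ ∑ k ∈ Ico (p K) (p 0), dist (f k) (f (k + 1)) := sum_range_dist_le_sum_Ico_dist f hp K
    _ ≤ ∑ k ∈ range (p 0), dist (f k) (f (k + 1)) :=
      sum_le_sum_of_subset_of_nonneg (range_eq_Ico (p 0) ▸ Ico_subset_Ico_left (Nat.zero_le _))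
        fun _ _ _ => dist_nonneg
    _ = _ := by
      refine sum_congr rfl fun k _ => ?_
      rw [dist_comm, Real.dist_eq]
      simp only [f]
      push_cast
      ring_nf
end

section
/- Let ψ_ε = φ_ε * φ_ε where φ_ε is the normalized indicator (1/(2ε))1_{[−ε,ε]}, so ψ̂_ε(ℓ) = (sin(ℓε)/(ℓε))². If (ε_k) is a non-increasing sequence of positive reals tending to 0, then sup over ℓ ∈ ℤ of ∑_{k=1}^∞ |(sin(ℓε_k)/(ℓε_k))² − (sin(ℓε_{k+1})/(ℓε_{k+1}))²| is finite. -/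
/-!
The `k`-th term is `|g (x k) - g (x (k + 1))|` for `g x = (sin x / x) ^ 2` and the
non-increasing positive sequence `x k = |ℓ| * ε k` (`g` is even). On `(0, ∞)` one has
`|g'(x)| ≤ 16 / (1 + x) ^ 2`, the derivative of the bounded increasing function
`-16 / (1 + x)`, so the sum telescopes to at most `16`, uniformly in `ℓ` and `M`.
-/

open Real Set

theorem norm_image_sub_le_of_norm_deriv_le_deriv {E : Type*} [NormedAddCommGroup E]
    [NormedSpace ℝ E] {f f' : ℝ → E} {V V' : ℝ → ℝ} {a b : ℝ} (hba : b ≤ a)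
    (hf : ∀ x ∈ Icc b a, HasDerivAt f (f' x) x) (hV : ∀ x ∈ Icc b a, HasDerivAt V (V' x) x)
    (bound : ∀ x ∈ Icc b a, ‖f' x‖ ≤ V' x) :
    ‖f a - f b‖ ≤ V a - V b :=
  image_norm_le_of_norm_deriv_right_le_deriv_boundary' (f := fun x => f x - f b)
    (B := fun x => V x - V b)
    (fun x hx => ((hf x hx).continuousAt.sub continuousAt_const).continuousWithinAt)
    (fun x hx => ((hf x (Ico_subset_Icc_self hx)).sub_const (f b)).hasDerivWithinAt)
    (by simp)
    (fun x hx => ((hV x hx).continuousAt.sub continuousAt_const).continuousWithinAt)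
    (fun x hx => ((hV x (Ico_subset_Icc_self hx)).sub_const (V b)).hasDerivWithinAt)
    (fun x hx => bound x (Ico_subset_Icc_self hx)) (right_mem_Icc.2 hba)

noncomputable def sincSq (x : ℝ) : ℝ := (sin x / x) ^ 2

theorem sincSq_neg (x : ℝ) : sincSq (-x) = sincSq x := by
  simp [sincSq, neg_div_neg_eq]

theorem sincSq_abs (x : ℝ) : sincSq |x| = sincSq x := by
  rcases abs_choice x with h | h <;> rw [h]
  exact sincSq_neg x

theorem hasDerivAt_sincSq {x : ℝ} (hx : x ≠ 0) :
    HasDerivAt sincSq (2 * sin x * (x * cos x - sin x) / x ^ 3) x := by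
  refine (((hasDerivAt_sin x).div (hasDerivAt_id' x) hx).fun_pow 2).congr_deriv ?_
  simp only [Pi.div_apply, Nat.cast_ofNat, Nat.add_one_sub_one, pow_one]
  field_simp

theorem abs_mul_cos_sub_sin_le {x : ℝ} (hx₀ : 0 < x) :
    |x * cos x - sin x| ≤ x ^ 3 / 2 := by
  have hcos := one_sub_sq_div_two_le_cos (x := x)
  have hsin := sin_gt_sub_cube hx₀
  rw [abs_le]
  constructor <;> nlinarith [sin_le hx₀.le, cos_le_one x]

/-- The derivative is at most `x` on `(0, 1]` and at most `2 (x + 1) / x ^ 3` on `[1, ∞)`. -/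
theorem abs_deriv_sincSq_le {x : ℝ} (hx : 0 < x) :
    |2 * sin x * (x * cos x - sin x) / x ^ 3| ≤ 16 / (1 + x) ^ 2 := by
  rw [abs_div, abs_mul, abs_mul, abs_of_pos (by positivity : (0 : ℝ) < x ^ 3), abs_two,
    div_le_div_iff₀ (by positivity) (by positivity)]
  have hs₀ := abs_nonneg (sin x)
  have hd₀ := abs_nonneg (x * cos x - sin x)
  rcases le_total x 1 with hx₁ | hx₁
  · have hs : |sin x| ≤ x := abs_sin_le_abs.trans_eq (abs_of_pos hx)
    have hd := abs_mul_cos_sub_sin_le hx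
    have hprod : 2 * |sin x| * |x * cos x - sin x| ≤ x ^ 4 := by
      nlinarith [mul_le_mul hs hd hd₀ hx.le]
    have hx₂ : x * (1 + x) ^ 2 ≤ 16 := by nlinarith
    nlinarith [mul_le_mul_of_nonneg_right hprod (by positivity : (0 : ℝ) ≤ (1 + x) ^ 2),
      mul_le_mul_of_nonneg_left hx₂ (pow_pos hx 3).le]
  · have hs := abs_sin_le_one x
    have hd : |x * cos x - sin x| ≤ x + 1 := by
      calc |x * cos x - sin x| ≤ |x * cos x| + |sin x| := abs_sub _ _
        _ ≤ x * 1 + 1 := by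
          rw [abs_mul, abs_of_pos hx]
          gcongr
          exact abs_cos_le_one x
        _ = x + 1 := by ring
    have hprod : 2 * |sin x| * |x * cos x - sin x| ≤ 2 * (x + 1) := by
      nlinarith [mul_le_mul hs hd hd₀ zero_le_one]
    nlinarith [mul_le_mul_of_nonneg_right hprod (by positivity : (0 : ℝ) ≤ (1 + x) ^ 2),
      mul_nonneg (mul_nonneg (sub_nonneg.2 hx₁) (sub_nonneg.2 hx₁)) (sub_nonneg.2 hx₁)]

theorem abs_sincSq_sub_le {a b : ℝ} (hb : 0 < b) (hba : b ≤ a) :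
    |sincSq a - sincSq b| ≤ 16 / (1 + b) - 16 / (1 + a) := by
  have hpos : ∀ x ∈ Icc b a, 0 < x := fun x hx => hb.trans_le hx.1
  have hV : ∀ x ∈ Icc b a, HasDerivAt (fun y => -(16 / (1 + y))) (16 / (1 + x) ^ 2) x := by
    intro x hx
    have hx₁ : 1 + x ≠ 0 := by linarith [hpos x hx]
    simpa [div_eq_mul_inv] using
      (((hasDerivAt_id' x).const_add 1).fun_inv hx₁).fun_neg.const_mul 16
  have h := norm_image_sub_le_of_norm_deriv_le_deriv hba
    (fun x hx => hasDerivAt_sincSq (hpos x hx).ne') hV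
    (fun x hx => abs_deriv_sincSq_le (hpos x hx))
  simp only [Real.norm_eq_abs] at h
  linarith

theorem stmt_18_general (ε : ℕ → ℝ) (hpos : ∀ k, 0 < ε k)
    (hmono : ∀ k, ε (k + 1) ≤ ε k) :
    ∃ C : ℝ, ∀ ℓ : ℤ, ∀ M : ℕ,
      ∑ k ∈ Finset.range M,
        |(Real.sin ((ℓ : ℝ) * ε k) / ((ℓ : ℝ) * ε k)) ^ 2
          - (Real.sin ((ℓ : ℝ) * ε (k + 1)) / ((ℓ : ℝ) * ε (k + 1))) ^ 2| ≤ C := by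
  refine ⟨16, fun ℓ M => ?_⟩
  rcases eq_or_ne ℓ 0 with rfl | hℓ
  · simp
  set x : ℕ → ℝ := fun k => |(ℓ : ℝ)| * ε k
  have hx : ∀ k, 0 < x k := fun k => mul_pos (by positivity) (hpos k)
  have hterm : ∀ k, (sin ((ℓ : ℝ) * ε k) / ((ℓ : ℝ) * ε k)) ^ 2 = sincSq (x k) := fun k => by
    change sincSq _ = _
    rw [← sincSq_abs, abs_mul, abs_of_pos (hpos k)]
  calc _ ≤ ∑ k ∈ Finset.range M, (16 / (1 + x (k + 1)) - 16 / (1 + x k)) := by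
        gcongr with k
        rw [hterm, hterm]
        exact abs_sincSq_sub_le (hx (k + 1)) (mul_le_mul_of_nonneg_left (hmono k) (abs_nonneg _))
    _ = 16 / (1 + x M) - 16 / (1 + x 0) := Finset.sum_range_sub (fun k => 16 / (1 + x k)) M
    _ ≤ 16 := by
      have hM : 16 / (1 + x M) ≤ 16 := div_le_self (by norm_num) (by linarith [hx M])
      have h₀ : 0 ≤ 16 / (1 + x 0) := div_nonneg (by norm_num) (by linarith [hx 0])
      linarith

open Filter in
theorem stmt_18 (ε : ℕ → ℝ) (hpos : ∀ k, 0 < ε k)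
    (hmono : ∀ k, ε (k + 1) ≤ ε k)
    (hlim : Tendsto ε atTop (nhds 0)) :
    ∃ C : ℝ, ∀ ℓ : ℤ, ∀ M : ℕ,
      ∑ k ∈ Finset.range M,
        |(Real.sin ((ℓ : ℝ) * ε k) / ((ℓ : ℝ) * ε k)) ^ 2
          - (Real.sin ((ℓ : ℝ) * ε (k + 1)) / ((ℓ : ℝ) * ε (k + 1))) ^ 2| ≤ C :=
  stmt_18_general ε hpos hmono
end
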